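/- For all integers m ≥ 1, n ≥ 1 and every h with 0 ≤ h ≤ m−1, det(A′_n − t_{h,m}·I_n) = 2·T_n(1 + 2·cos²((m−h)π/(2m+1))), where t_{h,m} = 2·cos((2h+1)π/(2m+1)). -/

import Mathlib

/-!
Write `D n = det (A′_n - t I)`. Expanding twice along the first row gives
`D (k + 3) = (4 - t) D (k + 2) - D (k + 1)`, the Chebyshev recurrence at `x = (4 - t) / 2`;
the entry `-2` in the last row makes `D 2 = 2 T₂ x` besides `D 1 = 2 T₁ x`, so `D n = 2 Tₙ x`
for `n ≥ 1`. For `t = 2 cos (π - 2θ)` with `θ = (m - h)π/(2m+1)` one has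
`(4 - t) / 2 = 1 + 2 cos² θ`.
-/

open Real Polynomial

/-- The `n × n` matrix `A′_n`: all diagonal entries `4`, entry `-1` at every position
`(h,k)` with `|h-k| = 1` except at position `(n, n-1)` (the last row, next-to-last
column), where the entry is `-2`, and `0` elsewhere. -/
def matA' (n : ℕ) : Matrix (Fin n) (Fin n) ℝ :=
  Matrix.of fun h k =>
    if h = k then 4
    else if (h : ℕ) = n - 1 ∧ (k : ℕ) + 2 = n then -2
    else if |(h : ℤ) - (k : ℤ)| = 1 then -1 else 0

namespace Matrix

theorem det_of_row_zero_col_zero_tridiagonal {R : Type*} [CommRing R] {n : ℕ}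
    (M : Matrix (Fin (n + 2)) (Fin (n + 2)) R)
    (hrow : ∀ j : Fin n, M 0 j.succ.succ = 0) (hcol : ∀ i : Fin n, M i.succ.succ 0 = 0) :
    M.det = M 0 0 * (M.submatrix Fin.succ Fin.succ).det -
      M 0 1 * M 1 0 * (M.submatrix (Fin.succ ∘ Fin.succ) (Fin.succ ∘ Fin.succ)).det := by
  have hminor : (M.submatrix Fin.succ (Fin.succAbove 1)).det =
      M 1 0 * (M.submatrix (Fin.succ ∘ Fin.succ) (Fin.succ ∘ Fin.succ)).det := by
    rw [det_succ_column_zero, Fin.sum_univ_succ]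
    simp [hcol, Function.comp_def]
  rw [det_succ_row_zero, Fin.sum_univ_succ, Fin.sum_univ_succ]
  simp [hrow, hminor]
  ring

end Matrix

theorem matA'_submatrix_succ (n : ℕ) : (matA' (n + 1)).submatrix Fin.succ Fin.succ = matA' n := by
  ext i j
  have hi := i.isLt
  have hcond : ((i : ℕ) + 1 = n ∧ (j : ℕ) + 1 + 1 = n) ↔ ((i : ℕ) = n - 1 ∧ (j : ℕ) + 2 = n) := by
    omega
  simp [matA', Fin.succ_inj, hcond]

theorem matA'_sub_smul_submatrix_succ (n : ℕ) (t : ℝ) :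
    (matA' (n + 1) - t • 1).submatrix Fin.succ Fin.succ = matA' n - t • 1 := by
  rw [← matA'_submatrix_succ n]
  ext i j
  simp [Matrix.one_apply]

theorem det_matA'_sub_smul_add_three (t : ℝ) (k : ℕ) :
    (matA' (k + 3) - t • 1).det =
      (4 - t) * (matA' (k + 2) - t • 1).det - (matA' (k + 1) - t • 1).det := by
  rw [Matrix.det_of_row_zero_col_zero_tridiagonal, ← Matrix.submatrix_submatrix,
    matA'_sub_smul_submatrix_succ, matA'_sub_smul_submatrix_succ]
  · simp [matA']
  · intro j
    simp [matA', abs_eq, (Fin.succ_ne_zero _).symm]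
    omega
  · intro i
    simp [matA', abs_eq]
    omega

theorem det_matA'_sub_smul_eq_chebyshevT (t : ℝ) (n : ℕ) :
    (matA' (n + 1) - t • 1).det = 2 * (Chebyshev.T ℝ (n + 1 : ℕ)).eval ((4 - t) / 2) := by
  induction n using Nat.twoStepInduction with
  | zero =>
    simp [matA']
    ring
  | one =>
    simp [Matrix.det_fin_two, matA', Chebyshev.T_two]
    ring
  | more k ih₀ ih₁ =>
    rw [det_matA'_sub_smul_add_three, ih₁, ih₀]
    push_cast
    rw [show (k : ℤ) + 2 + 1 = (k + 1) + 2 by ring, Chebyshev.T_add_two]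
    simp only [eval_sub, eval_mul, eval_ofNat, eval_X]
    ring

theorem charpoly_matA'_value_eq_chebyshevT_general (m n : ℕ) (hn : 1 ≤ n)
    (h : ℕ) :
    Matrix.det
        (matA' n - (2 * Real.cos ((2 * h + 1) * π / (2 * m + 1))) •
          (1 : Matrix (Fin n) (Fin n) ℝ)) =
      2 * (Polynomial.Chebyshev.T ℝ n).eval
        (1 + 2 * Real.cos (((m : ℝ) - h) * π / (2 * m + 1)) ^ 2) := by
  obtain ⟨k, rfl⟩ := Nat.exists_eq_add_of_le' hn
  rw [det_matA'_sub_smul_eq_chebyshevT]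
  have hangle : (2 * h + 1) * π / (2 * m + 1) = π - 2 * ((m - h) * π / (2 * m + 1)) := by
    field_simp
    ring
  rw [hangle, cos_pi_sub, cos_two_mul]
  congr 2
  ring

theorem charpoly_matA'_value_eq_chebyshevT (m n : ℕ) (hm : 1 ≤ m) (hn : 1 ≤ n)
    (h : ℕ) (hh : h ≤ m - 1) :
    Matrix.det
        (matA' n - (2 * Real.cos ((2 * h + 1) * π / (2 * m + 1))) •
          (1 : Matrix (Fin n) (Fin n) ℝ)) =
      2 * (Polynomial.Chebyshev.T ℝ n).eval
        (1 + 2 * Real.cos (((m : ℝ) - h) * π / (2 * m + 1)) ^ 2) :=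
  charpoly_matA'_value_eq_chebyshevT_general m n hn h
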